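/- arXiv:1307.5884 — 2 statements merged into one kernel-verified Lean document; each statement's English description precedes it below -/
import Mathlib

section
/- Let r, t be sequences of nonzero reals, s a sequence with s_0 ≠ 0, and p = (p_n) bounded with p_n ≥ 1. The space l(r,s,t,p;Δ) = {x ∈ ℝ^ℕ : ∑_n |(1/r_n) ∑_{k=0}^n s_{n−k} t_k (x_k − x_{k−1})|^{p_n} < ∞} (with x_{−1} = 0) is a complete linear metric space under the paranorm h̃(x) = (∑_n |(1/r_n) ∑_{k=0}^n s_{n−k} t_k Δx_k|^{p_n})^{1/M}, where M = sup_n p_n. -/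
open Finset Filter Topology ENNReal

/-- The difference operator `Δ` with the convention `x₋₁ = 0`. -/
def del (x : ℕ → ℝ) (k : ℕ) : ℝ :=
  x k - if k = 0 then 0 else x (k - 1)

/-- The generalized-means-of-differences transform `(A(r,s,t)·Δ)x`. -/
noncomputable def Amap (r s t : ℕ → ℝ) (x : ℕ → ℝ) (n : ℕ) : ℝ :=
  (1 / r n) * ∑ k ∈ Finset.range (n + 1), s (n - k) * t k * del x k

/-- The modular `σ_p` on `l(r,s,t,p;Δ)`, with values in `[0,∞]`. -/
noncomputable def sigmaP (r s t p : ℕ → ℝ) (x : ℕ → ℝ) : ℝ≥0∞ :=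
  ∑' n, ENNReal.ofReal (|Amap r s t x n| ^ p n)

/-- The space `l(r,s,t,p;Δ)`. -/
def lrstp (r s t p : ℕ → ℝ) : Set (ℕ → ℝ) :=
  {x | sigmaP r s t p x < ⊤}

/-- The paranorm `h̃` on `l(r,s,t,p;Δ)`. -/
noncomputable def htilde (r s t p : ℕ → ℝ) (M : ℝ) (x : ℕ → ℝ) : ℝ :=
  ((sigmaP r s t p x).toReal) ^ (1 / M)

/-- The Luxemburg norm on `l(r,s,t,p;Δ)`. -/
noncomputable def lux (r s t p : ℕ → ℝ) (x : ℕ → ℝ) : ℝ :=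
  sInf {c : ℝ | 0 < c ∧ sigmaP r s t p (c⁻¹ • x) ≤ 1}

/-!
Since `pₙ / M ≤ 1`, the map `u ↦ u ^ (pₙ / M)` is subadditive, so Minkowski's inequality with
the constant exponent `M`, applied to `|(AΔx)ₙ| ^ (pₙ / M)`, gives
`σ(x + y) ^ (1/M) ≤ σ(x) ^ (1/M) + σ(y) ^ (1/M)`: closure under addition and the triangle
inequality for `h̃`. Scalar multiplication is continuous because `h̃(c x) ≤ max 1 |c| · h̃(x)`
and, as `|c| ^ pₙ ≤ |c|` for `|c| ≤ 1`, `h̃(c x) ≤ |c| ^ (1/M) · h̃(x)`.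

For completeness, `|(AΔd)ₙ| ≤ h̃(d)` whenever `h̃(d) ≤ 1`, so the transforms of a Cauchy sequence
converge coordinatewise. The transform is lower triangular with diagonal `s₀ tₙ / rₙ ≠ 0`, so
forward substitution recovers `Δx`, and hence `x`, coordinatewise from `AΔx`; the sequence itself
therefore converges coordinatewise to some `x`, and Fatou's lemma bounds `σ(xₘ - x)` by
`liminf_l σ(xₘ - x_l)`, which the Cauchy condition makes small.
-/

lemma del_add (x y : ℕ → ℝ) (k : ℕ) : del (x + y) k = del x k + del y k := by
  simp only [del, Pi.add_apply]; split <;> ring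

lemma del_smul (c : ℝ) (x : ℕ → ℝ) (k : ℕ) : del (c • x) k = c * del x k := by
  simp only [del, Pi.smul_apply, smul_eq_mul]; split <;> ring

noncomputable def Amap.linearMap (r s t : ℕ → ℝ) : (ℕ → ℝ) →ₗ[ℝ] ℕ → ℝ where
  toFun := Amap r s t
  map_add' x y := funext fun n => by
    simp only [Amap, Pi.add_apply, del_add, mul_add, sum_add_distrib]
  map_smul' c x := funext fun n => by
    simp only [Amap, del_smul, Pi.smul_apply, smul_eq_mul, RingHom.id_apply, mul_sum]
    exact sum_congr rfl fun k _ => by ring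

section Amap

variable (r s t : ℕ → ℝ)

lemma Amap_zero (n : ℕ) : Amap r s t 0 n = 0 :=
  congrFun (map_zero (Amap.linearMap r s t)) n

lemma Amap_add (x y : ℕ → ℝ) (n : ℕ) :
    Amap r s t (x + y) n = Amap r s t x n + Amap r s t y n :=
  congrFun (map_add (Amap.linearMap r s t) x y) n

lemma Amap_neg (x : ℕ → ℝ) (n : ℕ) : Amap r s t (-x) n = -Amap r s t x n :=
  congrFun (map_neg (Amap.linearMap r s t) x) n

lemma Amap_sub (x y : ℕ → ℝ) (n : ℕ) :
    Amap r s t (x - y) n = Amap r s t x n - Amap r s t y n :=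
  congrFun (map_sub (Amap.linearMap r s t) x y) n

lemma Amap_smul (c : ℝ) (x : ℕ → ℝ) (n : ℕ) : Amap r s t (c • x) n = c * Amap r s t x n :=
  congrFun (map_smul (Amap.linearMap r s t) c x) n

end Amap

namespace ENNReal

lemma Lp_add_le_tsum {ι : Type*} (u v : ι → ℝ≥0∞) {p : ℝ} (hp : 1 ≤ p) :
    (∑' i, (u i + v i) ^ p) ^ (1 / p) ≤ (∑' i, u i ^ p) ^ (1 / p) + (∑' i, v i ^ p) ^ (1 / p) := by
  let _ : MeasurableSpace ι := ⊤
  simpa [MeasureTheory.lintegral_count] using lintegral_Lp_add_le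
    (μ := MeasureTheory.Measure.count) (Measurable.of_discrete (f := u)).aemeasurable
    (Measurable.of_discrete (f := v)).aemeasurable hp

lemma Lp_add_le_tsum_of_le {ι : Type*} (u v : ι → ℝ≥0∞) {p : ι → ℝ} {M : ℝ}
    (hp : ∀ i, 0 ≤ p i) (hpM : ∀ i, p i ≤ M) (hM : 1 ≤ M) :
    (∑' i, (u i + v i) ^ p i) ^ (1 / M)
      ≤ (∑' i, u i ^ p i) ^ (1 / M) + (∑' i, v i ^ p i) ^ (1 / M) := by
  have hM0 : 0 < M := zero_lt_one.trans_le hM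
  have hq : ∀ i, 0 ≤ p i / M := fun i => div_nonneg (hp i) hM0.le
  have hpow : ∀ (w : ι → ℝ≥0∞) i, (w i ^ (p i / M)) ^ M = w i ^ p i := fun w i => by
    rw [← ENNReal.rpow_mul, div_mul_cancel₀ _ hM0.ne']
  calc (∑' i, (u i + v i) ^ p i) ^ (1 / M)
      ≤ (∑' i, (u i ^ (p i / M) + v i ^ (p i / M)) ^ M) ^ (1 / M) := by
        gcongr with i
        rw [← hpow (fun i => u i + v i) i]
        gcongr
        exact rpow_add_le_add_rpow _ _ (hq i) (div_le_one_of_le₀ (hpM i) hM0.le)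
    _ ≤ _ := by
        simpa only [hpow] using
          Lp_add_le_tsum (fun i => u i ^ (p i / M)) (fun i => v i ^ (p i / M)) hM

end ENNReal

lemma abs_rpow_le_max_one_rpow (c : ℝ) {q M : ℝ} (hq : 0 ≤ q) (hqM : q ≤ M) :
    |c| ^ q ≤ max 1 |c| ^ M :=
  (Real.rpow_le_rpow (abs_nonneg c) (le_max_right 1 |c|) hq).trans
    (Real.rpow_le_rpow_of_exponent_le (le_max_left 1 |c|) hqM)

section Modular

variable {r s t p : ℕ → ℝ}

lemma sigmaP_eq_tsum_rpow (hp : ∀ n, 0 ≤ p n) (x : ℕ → ℝ) :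
    sigmaP r s t p x = ∑' n, ENNReal.ofReal |Amap r s t x n| ^ p n :=
  tsum_congr fun n => (ENNReal.ofReal_rpow_of_nonneg (abs_nonneg _) (hp n)).symm

lemma sigmaP_zero (hp : ∀ n, 0 < p n) : sigmaP r s t p 0 = 0 := by
  simp [sigmaP, Amap_zero, fun n => Real.zero_rpow (hp n).ne']

lemma sigmaP_neg (x : ℕ → ℝ) : sigmaP r s t p (-x) = sigmaP r s t p x := by
  simp only [sigmaP, Amap_neg, abs_neg]

lemma sigmaP_add_rpow_le {M : ℝ} (hp : ∀ n, 0 ≤ p n) (hpM : ∀ n, p n ≤ M) (hM : 1 ≤ M)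
    (x y : ℕ → ℝ) :
    sigmaP r s t p (x + y) ^ (1 / M)
      ≤ sigmaP r s t p x ^ (1 / M) + sigmaP r s t p y ^ (1 / M) := by
  simp only [sigmaP_eq_tsum_rpow hp]
  calc (∑' n, ENNReal.ofReal |Amap r s t (x + y) n| ^ p n) ^ (1 / M)
      ≤ (∑' n, (ENNReal.ofReal |Amap r s t x n| + ENNReal.ofReal |Amap r s t y n|) ^ p n)
          ^ (1 / M) := by
        gcongr with n
        · exact hp n
        rw [Amap_add, ← ENNReal.ofReal_add (abs_nonneg _) (abs_nonneg _)]
        exact ENNReal.ofReal_le_ofReal (abs_add_le _ _)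
    _ ≤ _ := ENNReal.Lp_add_le_tsum_of_le _ _ hp hpM hM

lemma sigmaP_smul_le {c a : ℝ} (hca : ∀ n, |c| ^ p n ≤ a) (x : ℕ → ℝ) :
    sigmaP r s t p (c • x) ≤ ENNReal.ofReal a * sigmaP r s t p x := by
  rw [sigmaP, sigmaP, ← ENNReal.tsum_mul_left]
  gcongr with n
  rw [Amap_smul, abs_mul, Real.mul_rpow (abs_nonneg _) (abs_nonneg _),
    ← ENNReal.ofReal_mul ((Real.rpow_nonneg (abs_nonneg _) _).trans (hca n))]
  exact ENNReal.ofReal_le_ofReal (by gcongr; exact hca n)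

end Modular

section Space

variable {r s t p : ℕ → ℝ}

lemma sigmaP_smul_lt_top (hp : ∀ n, 0 ≤ p n) {M : ℝ} (hpM : ∀ n, p n ≤ M) (c : ℝ)
    {x : ℕ → ℝ} (hx : x ∈ lrstp r s t p) : sigmaP r s t p (c • x) < ⊤ :=
  (sigmaP_smul_le (fun n => abs_rpow_le_max_one_rpow c (hp n) (hpM n)) x).trans_lt
    (ENNReal.mul_lt_top ENNReal.ofReal_lt_top hx)

lemma sigmaP_add_lt_top (hp : ∀ n, 0 ≤ p n) {M : ℝ} (hpM : ∀ n, p n ≤ M) (hM : 1 ≤ M)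
    {x y : ℕ → ℝ} (hx : x ∈ lrstp r s t p) (hy : y ∈ lrstp r s t p) :
    sigmaP r s t p (x + y) < ⊤ := by
  have hM0 : 0 < 1 / M := one_div_pos.mpr (zero_lt_one.trans_le hM)
  rw [← ENNReal.rpow_lt_top_iff_of_pos hM0]
  exact (sigmaP_add_rpow_le hp hpM hM x y).trans_lt (ENNReal.add_lt_top.mpr
    ⟨ENNReal.rpow_lt_top_of_nonneg hM0.le hx.ne, ENNReal.rpow_lt_top_of_nonneg hM0.le hy.ne⟩)

variable (r s t p) in
def lrstpSubmodule (hp : ∀ n, 1 ≤ p n) (hbd : BddAbove (Set.range p)) :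
    Submodule ℝ (ℕ → ℝ) where
  carrier := lrstp r s t p
  zero_mem' := by
    show sigmaP r s t p 0 < ⊤
    rw [sigmaP_zero fun n => zero_lt_one.trans_le (hp n)]
    exact ENNReal.zero_lt_top
  add_mem' {x y} hx hy := by
    obtain ⟨M, hM⟩ := hbd
    exact sigmaP_add_lt_top (fun n => zero_le_one.trans (hp n)) (fun n => hM ⟨n, rfl⟩)
      ((hp 0).trans (hM ⟨0, rfl⟩)) hx hy
  smul_mem' c x hx := by
    obtain ⟨M, hM⟩ := hbd
    exact sigmaP_smul_lt_top (fun n => zero_le_one.trans (hp n)) (fun n => hM ⟨n, rfl⟩) c hx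

end Space

section Paranorm

variable {r s t p : ℕ → ℝ} {M : ℝ}

lemma htilde_nonneg (x : ℕ → ℝ) : 0 ≤ htilde r s t p M x :=
  Real.rpow_nonneg ENNReal.toReal_nonneg _

lemma htilde_zero (hp : ∀ n, 0 < p n) (hM : M ≠ 0) : htilde r s t p M 0 = 0 := by
  rw [htilde, sigmaP_zero hp, ENNReal.toReal_zero, Real.zero_rpow (one_div_ne_zero hM)]

lemma htilde_neg (x : ℕ → ℝ) : htilde r s t p M (-x) = htilde r s t p M x := by
  rw [htilde, htilde, sigmaP_neg]

lemma htilde_rpow (hM : M ≠ 0) (x : ℕ → ℝ) :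
    htilde r s t p M x ^ M = (sigmaP r s t p x).toReal := by
  rw [htilde, one_div, Real.rpow_inv_rpow ENNReal.toReal_nonneg hM]

lemma htilde_le_iff (hM : 0 < M) {x : ℕ → ℝ} (hx : x ∈ lrstp r s t p) {ε : ℝ} (hε : 0 ≤ ε) :
    htilde r s t p M x ≤ ε ↔ sigmaP r s t p x ≤ ENNReal.ofReal (ε ^ M) := by
  rw [← Real.rpow_le_rpow_iff (htilde_nonneg x) hε hM, htilde_rpow hM.ne',
    ENNReal.le_ofReal_iff_toReal_le hx.ne (Real.rpow_nonneg hε M)]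

lemma htilde_add_le (hp : ∀ n, 0 ≤ p n) (hpM : ∀ n, p n ≤ M) (hM : 1 ≤ M) {x y : ℕ → ℝ}
    (hx : x ∈ lrstp r s t p) (hy : y ∈ lrstp r s t p) :
    htilde r s t p M (x + y) ≤ htilde r s t p M x + htilde r s t p M y := by
  have hM0 : 0 ≤ 1 / M := one_div_nonneg.mpr (zero_le_one.trans hM)
  have hfin : ∀ z ∈ lrstp r s t p, sigmaP r s t p z ^ (1 / M) ≠ ⊤ := fun z hz =>
    (ENNReal.rpow_lt_top_of_nonneg hM0 hz.ne).ne
  simp only [htilde, ENNReal.toReal_rpow]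
  rw [← ENNReal.toReal_add (hfin x hx) (hfin y hy)]
  exact ENNReal.toReal_mono (ENNReal.add_ne_top.mpr ⟨hfin x hx, hfin y hy⟩)
    (sigmaP_add_rpow_le hp hpM hM x y)

lemma htilde_le_of_sigmaP_le (hM : 0 < M) {x y : ℕ → ℝ} (hx : x ∈ lrstp r s t p) {a : ℝ}
    (ha : 0 ≤ a) (h : sigmaP r s t p y ≤ ENNReal.ofReal a * sigmaP r s t p x) :
    htilde r s t p M y ≤ a ^ (1 / M) * htilde r s t p M x := by
  have h' : (sigmaP r s t p y).toReal ≤ a * (sigmaP r s t p x).toReal := by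
    simpa [ENNReal.toReal_mul, ENNReal.toReal_ofReal ha] using
      ENNReal.toReal_mono (ENNReal.mul_ne_top ENNReal.ofReal_ne_top hx.ne) h
  rw [htilde, htilde, ← Real.mul_rpow ha ENNReal.toReal_nonneg]
  exact Real.rpow_le_rpow ENNReal.toReal_nonneg h' (one_div_nonneg.mpr hM.le)

lemma htilde_smul_le (hp : ∀ n, 0 ≤ p n) (hpM : ∀ n, p n ≤ M) (hM : 0 < M) (c : ℝ)
    {x : ℕ → ℝ} (hx : x ∈ lrstp r s t p) :
    htilde r s t p M (c • x) ≤ max 1 |c| * htilde r s t p M x := by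
  have h := htilde_le_of_sigmaP_le (M := M) hM hx (by positivity)
    (sigmaP_smul_le (fun n => abs_rpow_le_max_one_rpow c (hp n) (hpM n)) x)
  rwa [one_div, Real.rpow_rpow_inv (by positivity) hM.ne'] at h

lemma htilde_smul_le_of_abs_le_one (hp : ∀ n, 1 ≤ p n) (hM : 0 < M) {c : ℝ} (hc : |c| ≤ 1)
    {x : ℕ → ℝ} (hx : x ∈ lrstp r s t p) :
    htilde r s t p M (c • x) ≤ |c| ^ (1 / M) * htilde r s t p M x :=
  htilde_le_of_sigmaP_le hM hx (abs_nonneg c) (sigmaP_smul_le (fun n =>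
    (Real.rpow_le_rpow_of_exponent_ge' (abs_nonneg c) hc zero_le_one (hp n)).trans_eq
      (Real.rpow_one _)) x)

lemma abs_Amap_le_htilde (hp : ∀ n, 0 < p n) (hpM : ∀ n, p n ≤ M) {x : ℕ → ℝ}
    (hx : x ∈ lrstp r s t p) (hx1 : htilde r s t p M x ≤ 1) (n : ℕ) :
    |Amap r s t x n| ≤ htilde r s t p M x := by
  have hM : 0 < M := (hp n).trans_le (hpM n)
  rw [← Real.rpow_le_rpow_iff (abs_nonneg _) (htilde_nonneg x) (hp n)]
  calc |Amap r s t x n| ^ p n ≤ (sigmaP r s t p x).toReal :=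
        (ENNReal.ofReal_le_iff_le_toReal hx.ne).mp (ENNReal.le_tsum (f := fun n =>
          ENNReal.ofReal (|Amap r s t x n| ^ p n)) n)
    _ = htilde r s t p M x ^ M := (htilde_rpow hM.ne' x).symm
    _ ≤ htilde r s t p M x ^ p n :=
        Real.rpow_le_rpow_of_exponent_ge' (htilde_nonneg x) hx1 (hp n).le (hpM n)

end Paranorm

section Continuity

variable {r s t p : ℕ → ℝ} {M : ℝ}

lemma tendsto_htilde_smul_sub_smul (hp : ∀ n, 1 ≤ p n) (hpM : ∀ n, p n ≤ M) {ι : Type*}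
    {l : Filter ι} {α : ℝ} {αs : ι → ℝ} {x : ℕ → ℝ} {xs : ι → ℕ → ℝ}
    (hx : x ∈ lrstp r s t p) (hxs : ∀ i, xs i ∈ lrstp r s t p) (hα : Tendsto αs l (𝓝 α))
    (h : Tendsto (fun i => htilde r s t p M (xs i - x)) l (𝓝 0)) :
    Tendsto (fun i => htilde r s t p M (αs i • xs i - α • x)) l (𝓝 0) := by
  have hp0 : ∀ n, 0 ≤ p n := fun n => zero_le_one.trans (hp n)
  have hM : 1 ≤ M := (hp 0).trans (hpM 0)
  have hM0 : 0 < M := zero_lt_one.trans_le hM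
  let S := lrstpSubmodule r s t p hp ⟨M, Set.forall_mem_range.2 hpM⟩
  have hδ : Tendsto (fun i => αs i - α) l (𝓝 0) := by simpa using hα.sub_const α
  set C := max 1 (|α| + 1)
  have hbound : ∀ᶠ i in l, htilde r s t p M (αs i • xs i - α • x)
      ≤ C * htilde r s t p M (xs i - x) + |αs i - α| ^ (1 / M) * htilde r s t p M x := by
    filter_upwards [hδ (Metric.closedBall_mem_nhds 0 one_pos)] with i hi
    have hi : |αs i - α| ≤ 1 := by simpa using hi
    have hxi : xs i - x ∈ S := S.sub_mem (hxs i) hx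
    have hαi : |αs i| ≤ |α| + 1 := by
      linarith [abs_sub_abs_le_abs_sub (αs i) α]
    calc htilde r s t p M (αs i • xs i - α • x)
        = htilde r s t p M (αs i • (xs i - x) + (αs i - α) • x) := by
          rw [smul_sub, sub_smul, sub_add_sub_cancel]
      _ ≤ htilde r s t p M (αs i • (xs i - x)) + htilde r s t p M ((αs i - α) • x) :=
          htilde_add_le hp0 hpM hM (S.smul_mem _ hxi) (S.smul_mem _ hx)
      _ ≤ max 1 |αs i| * htilde r s t p M (xs i - x)
            + |αs i - α| ^ (1 / M) * htilde r s t p M x :=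
          add_le_add (htilde_smul_le hp0 hpM hM0 _ hxi)
            (htilde_smul_le_of_abs_le_one hp hM0 hi hx)
      _ ≤ _ := by gcongr; exacts [htilde_nonneg _, max_le_max le_rfl hαi]
  have hlim : Tendsto (fun i => C * htilde r s t p M (xs i - x)
      + |αs i - α| ^ (1 / M) * htilde r s t p M x) l (𝓝 0) := by
    have hδM := (hδ.abs.rpow_const (Or.inr (one_div_nonneg.mpr hM0.le))).mul_const
      (htilde r s t p M x)
    rw [abs_zero, Real.zero_rpow (one_div_ne_zero hM0.ne'), zero_mul] at hδM
    simpa using (h.const_mul C).add hδM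
  exact squeeze_zero' (.of_forall fun i => htilde_nonneg _) hbound hlim

end Continuity

section Coordinatewise

variable {r s t : ℕ → ℝ} {ι : Type*} {l : Filter ι} {xs : ι → ℕ → ℝ}

lemma mul_del_eq {n : ℕ} (hr : r n ≠ 0) (x : ℕ → ℝ) :
    s 0 * t n * del x n
      = r n * Amap r s t x n - ∑ k ∈ range n, s (n - k) * t k * del x k := by
  rw [Amap, ← mul_assoc, mul_one_div_cancel hr, one_mul, sum_range_succ, Nat.sub_self]
  ring

lemma exists_tendsto_del_of_tendsto_Amap (hr : ∀ n, r n ≠ 0) (ht : ∀ n, t n ≠ 0)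
    (hs0 : s 0 ≠ 0) (h : ∀ n, ∃ a, Tendsto (fun i => Amap r s t (xs i) n) l (𝓝 a)) (n : ℕ) :
    ∃ d, Tendsto (fun i => del (xs i) n) l (𝓝 d) := by
  induction n using Nat.strong_induction_on with
  | _ n ih =>
    choose! d hd using ih
    obtain ⟨a, ha⟩ := h n
    have hdel : ∀ i, del (xs i) n
        = (r n * Amap r s t (xs i) n - ∑ k ∈ range n, s (n - k) * t k * del (xs i) k)
          / (s 0 * t n) := fun i => by
      rw [eq_div_iff (mul_ne_zero hs0 (ht n)), mul_comm, mul_del_eq (hr n)]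
    simp only [hdel]
    exact ⟨_, ((ha.const_mul _).sub (tendsto_finsetSum _ fun k hk =>
      (hd k (mem_range.mp hk)).const_mul _)).div_const _⟩

lemma exists_tendsto_apply_of_tendsto_del
    (h : ∀ n, ∃ d, Tendsto (fun i => del (xs i) n) l (𝓝 d)) (k : ℕ) :
    ∃ y, Tendsto (fun i => xs i k) l (𝓝 y) := by
  induction k with
  | zero => simpa [del] using h 0
  | succ k ih =>
    obtain ⟨d, hd⟩ := h (k + 1)
    obtain ⟨y, hy⟩ := ih
    have hsucc : ∀ i, xs i (k + 1) = del (xs i) (k + 1) + xs i k := fun i => by simp [del]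
    simp only [hsucc]
    exact ⟨_, hd.add hy⟩

lemma tendsto_Amap_of_tendsto_apply {x : ℕ → ℝ}
    (h : ∀ k, Tendsto (fun i => xs i k) l (𝓝 (x k))) (n : ℕ) :
    Tendsto (fun i => Amap r s t (xs i) n) l (𝓝 (Amap r s t x n)) := by
  have hdel : ∀ k, Tendsto (fun i => del (xs i) k) l (𝓝 (del x k)) := fun k =>
    (h k).sub (by split_ifs; exacts [tendsto_const_nhds, h _])
  exact (tendsto_finsetSum _ fun k _ => (hdel k).const_mul _).const_mul _

lemma sigmaP_le_liminf {p : ℕ → ℝ} (hp : ∀ n, 0 ≤ p n) [l.NeBot] [l.IsCountablyGenerated]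
    {x : ℕ → ℝ} (h : ∀ n, Tendsto (fun i => Amap r s t (xs i) n) l (𝓝 (Amap r s t x n))) :
    sigmaP r s t p x ≤ liminf (fun i => sigmaP r s t p (xs i)) l := by
  have hterm : ∀ n, ENNReal.ofReal (|Amap r s t x n| ^ p n)
      = liminf (fun i => ENNReal.ofReal (|Amap r s t (xs i) n| ^ p n)) l := fun n =>
    (ENNReal.tendsto_ofReal (((h n).abs).rpow_const (Or.inr (hp n)))).liminf_eq.symm
  simp only [sigmaP]
  rw [tsum_congr hterm]
  simpa [MeasureTheory.lintegral_count] using MeasureTheory.lintegral_liminf_le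
    (μ := MeasureTheory.Measure.count) (u := l)
    (f := fun i n => ENNReal.ofReal (|Amap r s t (xs i) n| ^ p n))
    fun i => measurable_of_countable _

end Coordinatewise

section Completeness

variable {r s t p : ℕ → ℝ} {M : ℝ}

lemma cauchySeq_Amap (hp : ∀ n, 0 < p n) (hpM : ∀ n, p n ≤ M) {xs : ℕ → ℕ → ℝ}
    (hdiff : ∀ m l, xs m - xs l ∈ lrstp r s t p)
    (hcauchy : ∀ ε : ℝ, 0 < ε → ∃ N, ∀ m l, N ≤ m → N ≤ l →
      htilde r s t p M (xs m - xs l) < ε) (n : ℕ) :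
    CauchySeq fun m => Amap r s t (xs m) n := by
  refine Metric.cauchySeq_iff.mpr fun ε hε => ?_
  obtain ⟨N, hN⟩ := hcauchy (min ε 1) (lt_min hε one_pos)
  refine ⟨N, fun m hm l hl => ?_⟩
  have h := hN m l hm hl
  rw [Real.dist_eq, ← Amap_sub]
  exact (abs_Amap_le_htilde hp hpM (hdiff m l) (h.le.trans (min_le_right _ _)) n).trans_lt
    (h.trans_le (min_le_left _ _))

lemma exists_tendsto_htilde_of_cauchy (hr : ∀ n, r n ≠ 0) (ht : ∀ n, t n ≠ 0) (hs0 : s 0 ≠ 0)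
    (hp : ∀ n, 1 ≤ p n) (hpM : ∀ n, p n ≤ M) {xs : ℕ → ℕ → ℝ}
    (hxs : ∀ m, xs m ∈ lrstp r s t p)
    (hcauchy : ∀ ε : ℝ, 0 < ε → ∃ N, ∀ m l, N ≤ m → N ≤ l →
      htilde r s t p M (xs m - xs l) < ε) :
    ∃ x ∈ lrstp r s t p, Tendsto (fun m => htilde r s t p M (xs m - x)) atTop (𝓝 0) := by
  have hp0 : ∀ n, 0 < p n := fun n => zero_lt_one.trans_le (hp n)
  have hM0 : 0 < M := (hp0 0).trans_le (hpM 0)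
  let S := lrstpSubmodule r s t p hp ⟨M, Set.forall_mem_range.2 hpM⟩
  have hdiff : ∀ m l, xs m - xs l ∈ S := fun m l => S.sub_mem (hxs m) (hxs l)
  have hA : ∀ n, ∃ a, Tendsto (fun m => Amap r s t (xs m) n) atTop (𝓝 a) := fun n =>
    cauchySeq_tendsto_of_complete (cauchySeq_Amap hp0 hpM hdiff hcauchy n)
  choose x hx using
    exists_tendsto_apply_of_tendsto_del (exists_tendsto_del_of_tendsto_Amap hr ht hs0 hA)
  have hsmall : ∀ ε : ℝ, 0 < ε → ∀ᶠ m in atTop,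
      sigmaP r s t p (xs m - x) ≤ ENNReal.ofReal (ε ^ M) := fun ε hε => by
    obtain ⟨N, hN⟩ := hcauchy ε hε
    filter_upwards [eventually_ge_atTop N] with m hm
    calc sigmaP r s t p (xs m - x) ≤ liminf (fun l => sigmaP r s t p (xs m - xs l)) atTop :=
          sigmaP_le_liminf (fun n => (hp0 n).le) fun n => by
            simpa only [Amap_sub] using
              tendsto_const_nhds.sub (tendsto_Amap_of_tendsto_apply hx n)
      _ ≤ ENNReal.ofReal (ε ^ M) := liminf_le_of_frequently_le' <|
          Eventually.frequently <| (eventually_ge_atTop N).mono fun l hl =>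
            (htilde_le_iff hM0 (hdiff m l) hε.le).mp (hN m l hm hl).le
  have hmem : ∀ᶠ m in atTop, xs m - x ∈ S :=
    (hsmall 1 one_pos).mono fun m hm => hm.trans_lt ENNReal.ofReal_lt_top
  obtain ⟨N, hN⟩ := hmem.exists
  have hxS : x ∈ S := by simpa using S.sub_mem (hxs N) hN
  refine ⟨x, hxS, tendsto_order.2 ⟨fun a ha =>
    .of_forall fun m => ha.trans_le (htilde_nonneg _), fun ε hε => ?_⟩⟩
  filter_upwards [hsmall (ε / 2) (half_pos hε), hmem] with m hm hm'
  exact ((htilde_le_iff hM0 hm' (half_pos hε).le).mpr hm).trans_lt (half_lt_self hε)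

end Completeness

theorem lrstp_complete_paranormed
    (r s t p : ℕ → ℝ) (hr : ∀ n, r n ≠ 0) (ht : ∀ n, t n ≠ 0) (hs0 : s 0 ≠ 0)
    (hp : ∀ n, 1 ≤ p n) (M : ℝ) (hM : M = ⨆ n, p n) (hbd : BddAbove (Set.range p)) :
    -- `l(r,s,t,p;Δ)` is a linear subspace
    ((0 : ℕ → ℝ) ∈ lrstp r s t p) ∧
    (∀ x y, x ∈ lrstp r s t p → y ∈ lrstp r s t p → x + y ∈ lrstp r s t p) ∧
    (∀ (c : ℝ) x, x ∈ lrstp r s t p → c • x ∈ lrstp r s t p) ∧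
    -- `h̃` is a paranorm
    htilde r s t p M 0 = 0 ∧
    (∀ x, htilde r s t p M (-x) = htilde r s t p M x) ∧
    (∀ x y, x ∈ lrstp r s t p → y ∈ lrstp r s t p →
      htilde r s t p M (x + y) ≤ htilde r s t p M x + htilde r s t p M y) ∧
    (∀ (α : ℝ) (αs : ℕ → ℝ) (x : ℕ → ℝ) (xs : ℕ → ℕ → ℝ),
      x ∈ lrstp r s t p → (∀ m, xs m ∈ lrstp r s t p) →
      Tendsto αs atTop (𝓝 α) →
      Tendsto (fun m => htilde r s t p M (xs m - x)) atTop (𝓝 0) →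
      Tendsto (fun m => htilde r s t p M (αs m • xs m - α • x)) atTop (𝓝 0)) ∧
    -- completeness with respect to the paranorm `h̃`
    (∀ xs : ℕ → ℕ → ℝ, (∀ m, xs m ∈ lrstp r s t p) →
      (∀ ε : ℝ, 0 < ε → ∃ N, ∀ m l, N ≤ m → N ≤ l →
        htilde r s t p M (xs m - xs l) < ε) →
      ∃ x ∈ lrstp r s t p,
        Tendsto (fun m => htilde r s t p M (xs m - x)) atTop (𝓝 0)) := by
  have hpM : ∀ n, p n ≤ M := fun n => hM ▸ le_ciSup hbd n
  have hp0 : ∀ n, 0 < p n := fun n => zero_lt_one.trans_le (hp n)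
  have hM1 : 1 ≤ M := (hp 0).trans (hpM 0)
  let S := lrstpSubmodule r s t p hp hbd
  exact ⟨S.zero_mem, fun x y => S.add_mem, fun c x => S.smul_mem c,
    htilde_zero hp0 (zero_lt_one.trans_le hM1).ne', htilde_neg,
    fun x y => htilde_add_le (fun n => (hp0 n).le) hpM hM1,
    fun α αs x xs hx hxs => tendsto_htilde_smul_sub_smul hp hpM hx hxs,
    fun xs => exists_tendsto_htilde_of_cauchy hr ht hs0 hp hpM⟩
end

section
/- Let (a_n), (x_n) be real sequences and for each k let (via the inversion formula) x_k = ∑_{j=0}^k ∑_{l=0}^{k−j} (−1)^l (D^{(s)}_l / t_{l+j}) r_j y_j. Then the Abel-type summation identity holds for each n: ∑_{k=0}^n a_k x_k = ∑_{k=0}^n r_k [ a_k/(s_0 t_k) + (D^{(s)}_0/t_k − D^{(s)}_1/t_{k+1}) ∑_{j=k+1}^n a_j + ∑_{l=k+2}^n (−1)^{l−k} (D^{(s)}_{l−k}/t_l) (∑_{j=l}^n a_j) ] y_k. -/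
/-!
After substituting the inversion formula for `x k`, the weight `a k` meets the term
`(-1)^l D_l / t_{l+j} · r_j y_j` exactly when `j + l ≤ k ≤ n`; interchanging the sums therefore
turns `a` into its tail sums `∑_{k=j+l}^n a_k`. In the coefficient of `r_j y_j`, the `l = 0`
tail splits as `a_j` plus the tail from `j + 1`, which joins the `l = 1` term, and
`D_0 = 1/s_0` turns `a_j D_0 / t_j` into `a_j / (s_0 t_j)`.
-/

open Finset

namespace Finset

theorem sum_Icc_eq_add_sum_Icc_succ {M : Type*} [AddCommMonoid M] (f : ℕ → M) {a b : ℕ}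
    (h : a ≤ b) : ∑ k ∈ Icc a b, f k = f a + ∑ k ∈ Icc (a + 1) b, f k := by
  rw [Icc_add_one_left_eq_Ioc, add_sum_Ioc_eq_sum_Icc h]

theorem sum_range_sub_add_one_eq_sum_Icc {M : Type*} [AddCommMonoid M] (f : ℕ → M) {a b : ℕ}
    (h : a ≤ b) : ∑ l ∈ range (b - a + 1), f (a + l) = ∑ k ∈ Icc a b, f k := by
  rw [← Ico_add_one_right_eq_Icc, sum_Ico_eq_sum_range, Nat.sub_add_comm h]

theorem sum_mul_sum_range_sum_range_sub {R : Type*} [NonUnitalNonAssocSemiring R]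
    (a : ℕ → R) (c : ℕ → ℕ → R) (n : ℕ) :
    ∑ k ∈ range (n + 1), a k * ∑ j ∈ range (k + 1), ∑ l ∈ range (k - j + 1), c j l =
      ∑ j ∈ range (n + 1), ∑ l ∈ range (n - j + 1), (∑ k ∈ Icc (j + l) n, a k) * c j l := by
  simp only [mul_sum, sum_mul]
  rw [sum_comm' (s' := fun j => Icc j n) (t' := range (n + 1)) (fun k j => by
    simp only [mem_range, mem_Icc]; omega)]
  refine sum_congr rfl fun j hj => sum_comm' fun k l => ?_
  simp only [mem_range, mem_Icc] at hj ⊢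
  omega

end Finset

theorem sum_range_tail_sum_mul_neg_one_pow {K : Type*} [Field K] (t D a : ℕ → K) {j n : ℕ}
    (hj : j ≤ n) :
    ∑ l ∈ range (n - j + 1), (∑ k ∈ Icc (j + l) n, a k) * ((-1) ^ l * (D l / t (l + j))) =
      a j * (D 0 / t j)
        + (D 0 / t j - D 1 / t (j + 1)) * (∑ k ∈ Icc (j + 1) n, a k)
        + ∑ l ∈ Icc (j + 2) n, (-1) ^ (l - j) * (D (l - j) / t l) * (∑ k ∈ Icc l n, a k) := by
  set A : ℕ → K := fun m => ∑ k ∈ Icc m n, a k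
  have hreindex : ∑ l ∈ range (n - j + 1), A (j + l) * ((-1) ^ l * (D l / t (l + j))) =
      ∑ m ∈ Icc j n, (-1) ^ (m - j) * (D (m - j) / t m) * A m := by
    rw [← sum_range_sub_add_one_eq_sum_Icc _ hj]
    refine sum_congr rfl fun l _ => ?_
    rw [Nat.add_sub_cancel_left, add_comm l j, mul_comm]
  rw [hreindex, sum_Icc_eq_add_sum_Icc_succ _ hj,
    show A j = a j + A (j + 1) from sum_Icc_eq_add_sum_Icc_succ a hj]
  rcases hj.eq_or_lt with rfl | hjn
  · simp [A, mul_comm]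
  · rw [sum_Icc_eq_add_sum_Icc_succ (a := j + 1) _ hjn, Nat.sub_self, Nat.add_sub_cancel_left,
      show j + 1 + 1 = j + 2 by omega]
    ring

theorem abel_type_summation_general
    (r s t : ℕ → ℝ)
    (D : ℕ → ℝ) (hD0 : D 0 = 1 / s 0)
    (a x y : ℕ → ℝ)
    (hx : ∀ k, x k = ∑ j ∈ Finset.range (k + 1), ∑ l ∈ Finset.range (k - j + 1),
      (-1 : ℝ) ^ l * (D l / t (l + j)) * r j * y j) :
    ∀ n, ∑ k ∈ Finset.range (n + 1), a k * x k =
      ∑ k ∈ Finset.range (n + 1), r k *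
        (a k / (s 0 * t k)
          + (D 0 / t k - D 1 / t (k + 1)) * (∑ j ∈ Finset.Icc (k + 1) n, a j)
          + ∑ l ∈ Finset.Icc (k + 2) n,
              (-1 : ℝ) ^ (l - k) * (D (l - k) / t l) * (∑ j ∈ Finset.Icc l n, a j))
        * y k := by
  intro n
  simp only [hx, sum_mul_sum_range_sum_range_sub]
  refine sum_congr rfl fun j hj => ?_
  calc ∑ l ∈ range (n - j + 1),
        (∑ k ∈ Icc (j + l) n, a k) * ((-1) ^ l * (D l / t (l + j)) * r j * y j)
      = (∑ l ∈ range (n - j + 1),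
          (∑ k ∈ Icc (j + l) n, a k) * ((-1) ^ l * (D l / t (l + j)))) * (r j * y j) := by
        rw [sum_mul]
        exact sum_congr rfl fun l _ => by ring
    _ = _ := by
        rw [sum_range_tail_sum_mul_neg_one_pow t D a (Nat.lt_succ_iff.mp (mem_range.mp hj)), hD0]
        ring

theorem abel_type_summation
    (r s t : ℕ → ℝ) (hr : ∀ n, r n ≠ 0) (ht : ∀ n, t n ≠ 0) (hs0 : s 0 ≠ 0)
    (D : ℕ → ℝ) (hD0 : D 0 = 1 / s 0)
    (hD : ∀ n, ∑ j ∈ Finset.range (n + 1), s j * D (n - j) =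
      if n = 0 then 1 else 0)
    (a x y : ℕ → ℝ)
    (hx : ∀ k, x k = ∑ j ∈ Finset.range (k + 1), ∑ l ∈ Finset.range (k - j + 1),
      (-1 : ℝ) ^ l * (D l / t (l + j)) * r j * y j) :
    ∀ n, ∑ k ∈ Finset.range (n + 1), a k * x k =
      ∑ k ∈ Finset.range (n + 1), r k *
        (a k / (s 0 * t k)
          + (D 0 / t k - D 1 / t (k + 1)) * (∑ j ∈ Finset.Icc (k + 1) n, a j)
          + ∑ l ∈ Finset.Icc (k + 2) n,
              (-1 : ℝ) ^ (l - k) * (D (l - k) / t l) * (∑ j ∈ Finset.Icc l n, a j))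
        * y k :=
  abel_type_summation_general r s t D hD0 a x y hx
end
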